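/- Let G be a finite group with subgroups H₁, H₂ satisfying the Sunada condition. If H₁ is a normal subgroup of G, then H₁ = H₂. -/
import Mathlib

open Finset in
private lemma sunada_aux_card (G : Type*) [Group G] [Fintype G]
    [Fintype (ConjClasses G)] (H : Subgroup G) :
    Nat.card H = ∑ c : ConjClasses G, Nat.card (c.carrier ∩ (H : Set G) : Set G) := by
  classical
  have h1 : Nat.card H = ((H : Set G).toFinset).card := by
    rw [Nat.card_eq_fintype_card]
    simp [Set.toFinset_card]
  rw [h1, Finset.card_eq_sum_card_fiberwise
    (f := ConjClasses.mk) (t := Finset.univ) (fun x _ => Finset.mem_univ _)]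
  refine Finset.sum_congr rfl fun c _ => ?_
  have : (c.carrier ∩ (H : Set G)) =
      ↑((H : Set G).toFinset.filter (fun x => ConjClasses.mk x = c)) := by
    ext x
    simp [ConjClasses.mem_carrier_iff_mk_eq, and_comm]
  rw [this, Nat.card_coe_set_eq, Set.ncard_coe_finset]

/-- If `(G, H₁, H₂)` satisfies the Sunada condition and `H₁` is normal
in `G`, then `H₁ = H₂`. -/
theorem sunada_condition_normal_eq
    (G : Type*) [Group G] [Finite G] (H₁ H₂ : Subgroup G)
    (hSunada : ∀ g : G,
      Nat.card ({x | IsConj g x} ∩ (H₁ : Set G) : Set G) =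
        Nat.card ({x | IsConj g x} ∩ (H₂ : Set G) : Set G))
    (hnorm : H₁.Normal) :
    H₁ = H₂ := by
  classical
  have := Fintype.ofFinite G
  have : Fintype (ConjClasses G) := Fintype.ofFinite _
  -- H₂ ≤ H₁
  have hle : H₂ ≤ H₁ := by
    intro g hg
    have hpos : 0 < Nat.card ({x | IsConj g x} ∩ (H₂ : Set G) : Set G) := by
      have : g ∈ ({x | IsConj g x} ∩ (H₂ : Set G)) := ⟨IsConj.refl g, hg⟩
      exact Nat.card_pos_iff.mpr ⟨⟨g, this⟩, Set.Finite.to_subtype (Set.toFinite _)⟩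
    rw [← hSunada g] at hpos
    obtain ⟨⟨x⟩, -⟩ := Nat.card_pos_iff.mp hpos
    obtain ⟨hconj, hxH⟩ := x.2
    obtain ⟨c, hc⟩ := isConj_iff.mp hconj
    have h := hnorm.conj_mem _ hxH c⁻¹
    rw [← hc] at h
    simpa [mul_assoc] using h
  -- cardinalities equal
  have hcard : Nat.card H₁ = Nat.card H₂ := by
    rw [sunada_aux_card G H₁, sunada_aux_card G H₂]
    refine Finset.sum_congr rfl fun c _ => ?_
    induction c using Quotient.inductionOn with
    | h g =>
      have hcar : (ConjClasses.mk g).carrier = {x | IsConj g x} := by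
        ext x
        rw [ConjClasses.mem_carrier_iff_mk_eq, ConjClasses.mk_eq_mk_iff_isConj]
        exact isConj_comm
      rw [show (Quotient.mk _ g : ConjClasses G) = ConjClasses.mk g from rfl, hcar]
      exact hSunada g
  exact (Subgroup.eq_of_le_of_card_ge hle hcard.le).symm
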